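/- arXiv:2004.08699 — 3 statements merged into one kernel-verified Lean document; each statement's English description precedes it below -/
import Mathlib

section
/- Let $a, b, c, d, p, q$ be integers with $b \ge 1$, $d \ge 1$, $p = a + c$, $q = b + d$, $pb - qa = 1$, and $qc - pd = 1$. Then, as real numbers, $\lfloor p/q \rfloor \le a/b < p/q < c/d \le \lfloor p/q \rfloor + 1$; moreover if $a/b = \lfloor p/q \rfloor$ then $b = 1$, and if $c/d = \lfloor p/q \rfloor + 1$ then $d = 1$. -/
/-- For integers with `b, d ≥ 1`, `p = a + c`, `q = b + d`, `pb - qa = 1`, `qc - pd = 1`: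
as real numbers, `⌊p/q⌋ ≤ a/b < p/q < c/d ≤ ⌊p/q⌋ + 1`, with `a/b = ⌊p/q⌋` only if `b = 1`
and `c/d = ⌊p/q⌋ + 1` only if `d = 1`. -/
theorem mediant_bounds (a b c d p q : ℤ)
    (hb : 1 ≤ b) (hd : 1 ≤ d)
    (h1 : p = a + c) (h2 : q = b + d)
    (h3 : p * b - q * a = 1) (h4 : q * c - p * d = 1) :
    ((⌊(p : ℝ) / (q : ℝ)⌋ : ℝ) ≤ (a : ℝ) / (b : ℝ) ∧
      (a : ℝ) / (b : ℝ) < (p : ℝ) / (q : ℝ) ∧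
      (p : ℝ) / (q : ℝ) < (c : ℝ) / (d : ℝ) ∧
      (c : ℝ) / (d : ℝ) ≤ (⌊(p : ℝ) / (q : ℝ)⌋ : ℝ) + 1) ∧
    ((a : ℝ) / (b : ℝ) = (⌊(p : ℝ) / (q : ℝ)⌋ : ℝ) → b = 1) ∧
    ((c : ℝ) / (d : ℝ) = (⌊(p : ℝ) / (q : ℝ)⌋ : ℝ) + 1 → d = 1) := by
  have hq : (2:ℤ) ≤ q := by omega
  have hbR : (0:ℝ) < (b:ℝ) := by exact_mod_cast (by omega : (0:ℤ) < b)
  have hdR : (0:ℝ) < (d:ℝ) := by exact_mod_cast (by omega : (0:ℤ) < d)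
  have hqR : (0:ℝ) < (q:ℝ) := by exact_mod_cast (by omega : (0:ℤ) < q)
  set n : ℤ := ⌊(p : ℝ) / (q : ℝ)⌋ with hn
  -- n*q ≤ p
  have hfl : (n:ℝ) ≤ (p:ℝ)/(q:ℝ) := Int.floor_le _
  have h5 : n * q ≤ p := by
    have := (le_div_iff₀ hqR).mp hfl
    exact_mod_cast this
  have hlt : (p:ℝ)/(q:ℝ) < (n:ℝ) + 1 := Int.lt_floor_add_one _
  have h6 : p < (n + 1) * q := by
    have := (div_lt_iff₀ hqR).mp hlt
    push_cast at this
    exact_mod_cast this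
  -- p ≠ n*q
  have hne : p ≠ n * q := by
    intro h
    have hdvd : q ∣ 1 := ⟨n * b - a, by rw [← h3, h]; ring⟩
    have := Int.le_of_dvd one_pos hdvd
    omega
  have h5' : n * q + 1 ≤ p := by omega
  -- integer inequalities
  have ha : n * b ≤ a := by nlinarith
  have hc : c ≤ (n + 1) * d := by nlinarith
  refine ⟨⟨?_, ?_, ?_, ?_⟩, ?_, ?_⟩
  · rw [le_div_iff₀ hbR]
    exact_mod_cast ha
  · rw [div_lt_div_iff₀ hbR hqR]
    have : a * q < p * b := by nlinarith
    exact_mod_cast this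
  · rw [div_lt_div_iff₀ hqR hdR]
    have : p * d < c * q := by nlinarith
    exact_mod_cast this
  · rw [div_le_iff₀ hdR]
    have : (c:ℝ) ≤ ((n:ℝ) + 1) * d := by exact_mod_cast hc
    linarith
  · intro h
    rw [div_eq_iff (ne_of_gt hbR)] at h
    have hab : a = n * b := by exact_mod_cast h
    have hdvd : b ∣ 1 := ⟨p - n * q, by rw [← h3, hab]; ring⟩
    have := Int.le_of_dvd one_pos hdvd
    omega
  · intro h
    rw [div_eq_iff (ne_of_gt hdR)] at h
    have hcd : c = (n + 1) * d := by exact_mod_cast h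
    have hdvd : d ∣ 1 := ⟨(n + 1) * q - p, by linear_combination -h4 + q * hcd⟩
    have := Int.le_of_dvd one_pos hdvd
    omega
end

section
/- Let $a, b, c, d$ be integers with $b \ge 1$, $d \ge 1$, and $bc - ad = 1$. Then there exist integers $e, f$ with $f \ge 0$, such that $f = 0$ implies $e = 1$, $|fa - eb| = 1$, $|fc - ed| = 1$, and either $(a, b) = (c + e, d + f)$ or $(c, d) = (a + e, b + f)$. -/
/-- For integers `a, b, c, d` with `b, d ≥ 1` and `bc - ad = 1`, there exist integers
`e, f` with `f ≥ 0` (and `e = 1` whenever `f = 0`), `|fa - eb| = 1`, `|fc - ed| = 1`,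
and either `(a, b) = (c + e, d + f)` or `(c, d) = (a + e, b + f)`. -/
theorem exists_third_slope (a b c d : ℤ) (hb : 1 ≤ b) (hd : 1 ≤ d)
    (h : b * c - a * d = 1) :
    ∃ e f : ℤ, 0 ≤ f ∧ (f = 0 → e = 1) ∧
      |f * a - e * b| = 1 ∧ |f * c - e * d| = 1 ∧
      ((a = c + e ∧ b = d + f) ∨ (c = a + e ∧ d = b + f)) := by
  by_cases hbd : b ≤ d
  · refine ⟨c - a, d - b, by omega, ?_, ?_, ?_, Or.inr ⟨by ring, by ring⟩⟩
    · intro hf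
      have hdb : d = b := by omega
      have h1 : b * (c - a) = 1 := by rw [hdb] at h; linarith [h]
      rcases Int.mul_eq_one_iff_eq_one_or_neg_one.mp h1 with ⟨_, h2⟩ | ⟨h2, _⟩
      · omega
      · omega
    · have : (d - b) * a - (c - a) * b = -(b * c - a * d) := by ring
      rw [this, h]; simp
    · have : (d - b) * c - (c - a) * d = -(b * c - a * d) := by ring
      rw [this, h]; simp
  · refine ⟨a - c, b - d, by omega, by omega, ?_, ?_, Or.inl ⟨by ring, by ring⟩⟩
    · have : (b - d) * a - (a - c) * b = b * c - a * d := by ring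
      rw [this, h]; simp
    · have : (b - d) * c - (a - c) * d = b * c - a * d := by ring
      rw [this, h]; simp
end

section
/- Let $p$ and $q$ be coprime integers with $q \ge 2$. Then for all integers $m$ and $s$, $q^2 m \ne 2|p|(q-1) + 2qs$. -/
/-- For coprime integers `p, q` with `q ≥ 2`, the equation
`q² m = 2|p|(q - 1) + 2qs` has no integer solutions `m, s`. -/
theorem no_solution_qsq (p q : ℤ) (hpq : IsCoprime p q) (hq : 2 ≤ q) (m s : ℤ) :
    q ^ 2 * m ≠ 2 * |p| * (q - 1) + 2 * q * s := by
  intro h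
  have hqp : IsCoprime q |p| := by
    rcases abs_choice p with h' | h'
    · rw [h']; exact hpq.symm
    · rw [h']; exact (hpq.symm).neg_right
  have hdvd : q ∣ 2 * |p| := ⟨2 * |p| + 2 * s - q * m, by linear_combination h⟩
  have hq2 : q ∣ 2 := hqp.dvd_of_dvd_mul_right hdvd
  have : q = 2 := le_antisymm (Int.le_of_dvd (by norm_num) hq2) hq
  subst this
  have hodd : ¬ (2 : ℤ) ∣ p := by
    intro hd
    have := hpq.isUnit_of_dvd' hd (dvd_refl 2)
    simp [Int.isUnit_iff] at this
  rcases abs_choice p with h' | h' <;> rw [h'] at h <;> omega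
end
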